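/- arXiv:2603.19894 — 2 statements merged into one kernel-verified Lean document; each statement's English description precedes it below -/
import Mathlib

section
/- Fix ϑ ∈ (0,1) and let β : Σ → ℝ be a ϑ-Hölder function. Then there exist functions β̃ : Σ → ℝ and χ : Σ → ℝ, both ϑ^{1/2}-Hölder, such that β̃ depends only on the nonnegative coordinates (β̃(ω) = β̃(ω′) whenever ω_k = ω′_k for all k ≥ 0) and β = β̃ + χ − χ∘σ on Σ. -/
open MeasureTheory Filter Topology
open scoped ENNReal BoundedContinuousFunction

noncomputable section

/-- Two-sided binary sequence space `Σ = {0,1}^ℤ`. -/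
abbrev Seq2 : Type := ℤ → Bool

/-- One-sided binary sequence space `Σ⁺ = {0,1}^ℕ`. -/
abbrev Seq1 : Type := ℕ → Bool

/-- The shift map on two-sided sequences, `(σω)_k = ω_{k+1}`. -/
def shift2 (ω : Seq2) : Seq2 := fun k => ω (k + 1)

/-- The shift map on one-sided sequences, `(σω)_k = ω_{k+1}`. -/
def shift1 (ω : Seq1) : Seq1 := fun k => ω (k + 1)

/-- Two two-sided sequences agree on all indices `|i| < N`. -/
def Agree2 (N : ℕ) (ω ω' : Seq2) : Prop := ∀ i : ℤ, |i| < (N : ℤ) → ω i = ω' i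

/-- Two one-sided sequences agree on all indices `i < N`. -/
def Agree1 (N : ℕ) (ω ω' : Seq1) : Prop := ∀ i : ℕ, i < N → ω i = ω' i

/-- `N`-th variation of a function on the two-sided shift space. -/
def var2 {E : Type*} [SeminormedAddCommGroup E] (f : Seq2 → E) (N : ℕ) : ℝ≥0∞ :=
  ⨆ (ω : Seq2) (ω' : Seq2) (_ : Agree2 N ω ω'), (‖f ω - f ω'‖₊ : ℝ≥0∞)

/-- `N`-th variation of a function on the one-sided shift space. -/
def var1 {E : Type*} [SeminormedAddCommGroup E] (f : Seq1 → E) (N : ℕ) : ℝ≥0∞ :=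
  ⨆ (ω : Seq1) (ω' : Seq1) (_ : Agree1 N ω ω'), (‖f ω - f ω'‖₊ : ℝ≥0∞)

/-- Hölder seminorm `|f|_θ = sup_{N ≥ 1} θ^{-N} var_N f` (two-sided). -/
def hSemi2 {E : Type*} [SeminormedAddCommGroup E] (θ : ℝ) (f : Seq2 → E) : ℝ≥0∞ :=
  ⨆ (N : ℕ) (_ : 1 ≤ N), (ENNReal.ofReal θ)⁻¹ ^ N * var2 f N

/-- Hölder seminorm `|f|_θ = sup_{N ≥ 1} θ^{-N} var_N f` (one-sided). -/
def hSemi1 {E : Type*} [SeminormedAddCommGroup E] (θ : ℝ) (f : Seq1 → E) : ℝ≥0∞ :=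
  ⨆ (N : ℕ) (_ : 1 ≤ N), (ENNReal.ofReal θ)⁻¹ ^ N * var1 f N

/-- Sup norm (two-sided). -/
def supNorm2 {E : Type*} [SeminormedAddCommGroup E] (f : Seq2 → E) : ℝ≥0∞ :=
  ⨆ ω : Seq2, (‖f ω‖₊ : ℝ≥0∞)

/-- Sup norm (one-sided). -/
def supNorm1 {E : Type*} [SeminormedAddCommGroup E] (f : Seq1 → E) : ℝ≥0∞ :=
  ⨆ ω : Seq1, (‖f ω‖₊ : ℝ≥0∞)

/-- Hölder norm `‖f‖_θ = sup|f| + |f|_θ` (two-sided). -/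
def hNorm2 {E : Type*} [SeminormedAddCommGroup E] (θ : ℝ) (f : Seq2 → E) : ℝ≥0∞ :=
  supNorm2 f + hSemi2 θ f

/-- Hölder norm `‖f‖_θ = sup|f| + |f|_θ` (one-sided). -/
def hNorm1 {E : Type*} [SeminormedAddCommGroup E] (θ : ℝ) (f : Seq1 → E) : ℝ≥0∞ :=
  supNorm1 f + hSemi1 θ f

/-- `f` is `θ`-Hölder (two-sided). -/
def IsHolder2 {E : Type*} [SeminormedAddCommGroup E] (θ : ℝ) (f : Seq2 → E) : Prop :=
  hNorm2 θ f < ⊤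

/-- `f` is `θ`-Hölder (one-sided). -/
def IsHolder1 {E : Type*} [SeminormedAddCommGroup E] (θ : ℝ) (f : Seq1 → E) : Prop :=
  hNorm1 θ f < ⊤

/-- `μ` is the Bernoulli (1/2, 1/2) product measure on `{0,1}^ℤ`: it is a probability
measure giving each cylinder determined by finitely many coordinates its natural mass. -/
def IsBernoulli2 (μ : Measure Seq2) : Prop :=
  IsProbabilityMeasure μ ∧
    ∀ (s : Finset ℤ) (x : ℤ → Bool),
      μ {ω : Seq2 | ∀ i ∈ s, ω i = x i} = (1 / 2 : ℝ≥0∞) ^ s.card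

/-- `μ` is the Bernoulli (1/2, 1/2) product measure on `{0,1}^ℕ`. -/
def IsBernoulli1 (μ : Measure Seq1) : Prop :=
  IsProbabilityMeasure μ ∧
    ∀ (s : Finset ℕ) (x : ℕ → Bool),
      μ {ω : Seq1 | ∀ i ∈ s, ω i = x i} = (1 / 2 : ℝ≥0∞) ^ s.card

/-- Birkhoff sums `β_n(ω) = ∑_{j<n} β(σ^j ω)` (two-sided). -/
def bSum2 (β : Seq2 → ℝ) (n : ℕ) (ω : Seq2) : ℝ :=
  ∑ j ∈ Finset.range n, β (shift2^[j] ω)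

/-- Birkhoff sums `β_n(ω) = ∑_{j<n} β(σ^j ω)` (one-sided). -/
def bSum1 (β : Seq1 → ℝ) (n : ℕ) (ω : Seq1) : ℝ :=
  ∑ j ∈ Finset.range n, β (shift1^[j] ω)

/-- Condition (WM_m): the equation `e^{imβ(ω)} A(σω) = ν A(ω)` has only the trivial
solution `ν = 1`, `A` constant, among not-identically-zero `θ`-Hölder functions. -/
def WM2 (θ : ℝ) (β : Seq2 → ℝ) (m : ℕ) : Prop :=
  ∀ (A : Seq2 → ℂ) (ν : ℂ), IsHolder2 θ A → (∃ ω, A ω ≠ 0) →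
    (∀ ω, Complex.exp (Complex.I * (m : ℂ) * (β ω : ℂ)) * A (shift2 ω) = ν * A ω) →
    ν = 1 ∧ ∀ ω ω', A ω = A ω'

/-- Condition (WM_m) for the one-sided shift. -/
def WM1 (θ : ℝ) (β : Seq1 → ℝ) (m : ℕ) : Prop :=
  ∀ (A : Seq1 → ℂ) (ν : ℂ), IsHolder1 θ A → (∃ ω, A ω ≠ 0) →
    (∀ ω, Complex.exp (Complex.I * (m : ℂ) * (β ω : ℂ)) * A (shift1 ω) = ν * A ω) →
    ν = 1 ∧ ∀ ω ω', A ω = A ω'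

/-- Observable in the class `E_{θ,m}` with Fourier coefficient `A`:
`F(ω,s) = A(ω) e^{ims} + conj(A(ω)) e^{-ims}` (a real-valued function viewed in `ℂ`). -/
def obs (m : ℕ) (A : Seq2 → ℂ) (ω : Seq2) (s : ℝ) : ℂ :=
  A ω * Complex.exp (Complex.I * (m : ℂ) * (s : ℂ)) +
    (starRingEnd ℂ) (A ω) * Complex.exp (-(Complex.I * (m : ℂ) * (s : ℂ)))

/-- Normalized Haar (Lebesgue) measure on `𝕋 = ℝ/2πℤ`, realized on the fundamental
domain `(0, 2π]` of the real line. -/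
def haarT : Measure ℝ :=
  (ENNReal.ofReal (2 * Real.pi))⁻¹ • (volume.restrict (Set.Ioc 0 (2 * Real.pi)))

/-- A function on the two-sided shift space depends only on the coordinates `k ≥ 0`. -/
def DependsOnNonneg {α : Type*} (f : Seq2 → α) : Prop :=
  ∀ ω ω' : Seq2, (∀ k : ℤ, 0 ≤ k → ω k = ω' k) → f ω = f ω'

/-- A function on the two-sided shift space depends only on the coordinates `k ≤ 0`. -/
def DependsOnNonpos {α : Type*} (f : Seq2 → α) : Prop :=
  ∀ ω ω' : Seq2, (∀ k : ℤ, k ≤ 0 → ω k = ω' k) → f ω = f ω'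

end

/-!
Sinai's construction. Let `ψ` replace the negative coordinates of a sequence by `0`. Since
`σ^j ω` and `σ^j ψω` agree on `|i| ≤ j`, the series
`χ ω = ∑_{j ≥ 0} (β (σ^j ω) - β (σ^j ψω))` converges geometrically. If `ω, ω'` agree on
`|i| < N`, the first `N/2` terms of `χ ω - χ ω'` are `O(θ^{N/2})` because `β` is `θ`-Hölder,
and so is the tail, so `χ` is `θ^{1/2}`-Hölder. If `ω, ω'` agree on the nonnegative
coordinates then `ψω = ψω'` and `ψσω = ψσω'`, and the series for `χ ω - χ ω'` and
`χ σω - χ σω'` differ only by the term `β ω - β ω'`; hence `β̃ = β - χ + χ ∘ σ` depends only on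
the nonnegative coordinates.
-/

lemma shift2_iterate_apply (j : ℕ) (ω : Seq2) (i : ℤ) : shift2^[j] ω i = ω (i + j) := by
  induction j generalizing ω with
  | zero => simp
  | succ n ih =>
    rw [Function.iterate_succ_apply, ih]
    simp only [shift2, Nat.cast_succ, add_assoc, add_comm (n : ℤ)]

lemma Agree2.shift2_iterate {N : ℕ} {ω ω' : Seq2} (h : Agree2 N ω ω') (j : ℕ) :
    Agree2 (N - j) (shift2^[j] ω) (shift2^[j] ω') := by
  intro i hi
  rw [shift2_iterate_apply, shift2_iterate_apply]
  apply h
  have := abs_add_le i j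
  have := abs_nonneg i
  rw [Nat.abs_cast] at *
  omega

lemma Agree2.shift2 {N : ℕ} {ω ω' : Seq2} (h : Agree2 N ω ω') :
    Agree2 (N - 1) (shift2 ω) (shift2 ω') :=
  h.shift2_iterate 1

lemma agree2_shift2_iterate_of_agree_nonneg {ω ω' : Seq2} (h : ∀ k : ℤ, 0 ≤ k → ω k = ω' k)
    (j : ℕ) : Agree2 (j + 1) (shift2^[j] ω) (shift2^[j] ω') := by
  intro i hi
  rw [shift2_iterate_apply, shift2_iterate_apply]
  apply h
  have := neg_abs_le i
  omega

section Holder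

variable {E : Type*} [SeminormedAddCommGroup E] {θ C D : ℝ} {f g : Seq2 → E}

/-- `|f|_θ ≤ C`, written as the bounds `var_N f ≤ C θ^N` on the variations. -/
def VarLE (θ C : ℝ) (f : Seq2 → E) : Prop :=
  ∀ N, 1 ≤ N → ∀ ω ω', Agree2 N ω ω' → ‖f ω - f ω'‖ ≤ C * θ ^ N

lemma supNorm2_le_ofReal_iff {B : ℝ} (hB : 0 ≤ B) :
    supNorm2 f ≤ ENNReal.ofReal B ↔ ∀ ω, ‖f ω‖ ≤ B := by
  simp only [supNorm2, iSup_le_iff, ← enorm_eq_nnnorm, ← ofReal_norm,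
    ENNReal.ofReal_le_ofReal_iff hB]

lemma var2_le_ofReal_iff {N : ℕ} {c : ℝ} (hc : 0 ≤ c) :
    var2 f N ≤ ENNReal.ofReal c ↔ ∀ ω ω', Agree2 N ω ω' → ‖f ω - f ω'‖ ≤ c := by
  simp only [var2, iSup_le_iff, ← enorm_eq_nnnorm, ← ofReal_norm,
    ENNReal.ofReal_le_ofReal_iff hc]

lemma hSemi2_le_ofReal_iff (hθ : 0 < θ) (hC : 0 ≤ C) :
    hSemi2 θ f ≤ ENNReal.ofReal C ↔ VarLE θ C f := by
  have hx0 : ENNReal.ofReal θ ≠ 0 := by simpa using hθ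
  have key : ∀ N : ℕ, (ENNReal.ofReal θ)⁻¹ ^ N * var2 f N ≤ ENNReal.ofReal C ↔
      var2 f N ≤ ENNReal.ofReal (C * θ ^ N) := by
    intro N
    rw [← ENNReal.inv_pow, ENNReal.inv_mul_le_iff (pow_ne_zero _ hx0) (by finiteness),
      ENNReal.ofReal_mul hC, ENNReal.ofReal_pow hθ.le, mul_comm]
  simp only [hSemi2, iSup_le_iff, key]
  exact forall₂_congr fun N _ => var2_le_ofReal_iff (by positivity)

lemma VarLE.nonneg (hθ : 0 < θ) (hf : VarLE θ C f) : 0 ≤ C := by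
  have h := hf 1 le_rfl (fun _ => false) (fun _ => false) fun _ _ => rfl
  rw [sub_self, norm_zero, pow_one] at h
  exact nonneg_of_mul_nonneg_left h hθ

lemma isHolder2_iff (hθ : 0 < θ) :
    IsHolder2 θ f ↔ ∃ B C, (∀ ω, ‖f ω‖ ≤ B) ∧ VarLE θ C f := by
  constructor
  · intro hf
    obtain ⟨hsup, hsemi⟩ := ENNReal.add_lt_top.1 hf
    refine ⟨(supNorm2 f).toReal, (hSemi2 θ f).toReal, ?_, ?_⟩
    · rw [← supNorm2_le_ofReal_iff ENNReal.toReal_nonneg, ENNReal.ofReal_toReal hsup.ne]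
    · rw [← hSemi2_le_ofReal_iff hθ ENNReal.toReal_nonneg, ENNReal.ofReal_toReal hsemi.ne]
  · rintro ⟨B, C, hB, hC⟩
    have hB0 : 0 ≤ B := (norm_nonneg _).trans (hB fun _ => false)
    have hsup := (supNorm2_le_ofReal_iff hB0).2 hB
    have hsemi := (hSemi2_le_ofReal_iff hθ (hC.nonneg hθ)).2 hC
    exact (add_le_add hsup hsemi).trans_lt (by finiteness)

lemma VarLE.add (hf : VarLE θ C f) (hg : VarLE θ D g) : VarLE θ (C + D) (f + g) := by
  intro N hN ω ω' h
  calc ‖(f + g) ω - (f + g) ω'‖ = ‖(f ω - f ω') + (g ω - g ω')‖ := by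
        rw [Pi.add_apply, Pi.add_apply, add_sub_add_comm]
    _ ≤ C * θ ^ N + D * θ ^ N :=
        (norm_add_le _ _).trans (add_le_add (hf N hN ω ω' h) (hg N hN ω ω' h))
    _ = (C + D) * θ ^ N := by ring

lemma VarLE.neg (hf : VarLE θ C f) : VarLE θ C (-f) := by
  intro N hN ω ω' h
  rw [Pi.neg_apply, Pi.neg_apply, neg_sub_neg, norm_sub_rev]
  exact hf N hN ω ω' h

lemma VarLE.mono {θ' : ℝ} (hθ : 0 < θ) (hθθ' : θ ≤ θ') (hf : VarLE θ C f) : VarLE θ' C f :=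
  fun N hN ω ω' h => (hf N hN ω ω' h).trans <|
    mul_le_mul_of_nonneg_left (pow_le_pow_left₀ hθ.le hθθ' N) (hf.nonneg hθ)

lemma VarLE.comp_shift2 {B : ℝ} (hθ : 0 < θ) (hf : VarLE θ C f) (hB : ∀ ω, ‖f ω‖ ≤ B) :
    VarLE θ ((C + 2 * B) / θ) (f ∘ shift2) := by
  have hC := hf.nonneg hθ
  have hB0 : 0 ≤ B := (norm_nonneg _).trans (hB fun _ => false)
  rintro (_ | n) hn ω ω' h
  · omega
  have hmain : ‖f (shift2 ω) - f (shift2 ω')‖ ≤ (C + 2 * B) * θ ^ n := by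
    rcases n.eq_zero_or_pos with rfl | hn
    · simpa [two_mul] using norm_sub_le_of_le (hB _) (hB _) |>.trans (by linarith)
    · calc ‖f (shift2 ω) - f (shift2 ω')‖ ≤ C * θ ^ n := hf n hn _ _ h.shift2
        _ ≤ (C + 2 * B) * θ ^ n := by gcongr; linarith
  calc ‖(f ∘ shift2) ω - (f ∘ shift2) ω'‖ ≤ (C + 2 * B) * θ ^ n := hmain
    _ = (C + 2 * B) / θ * θ ^ (n + 1) := by field_simp; ring

lemma IsHolder2.add (hθ : 0 < θ) (hf : IsHolder2 θ f) (hg : IsHolder2 θ g) :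
    IsHolder2 θ (f + g) := by
  obtain ⟨B, C, hB, hC⟩ := (isHolder2_iff hθ).1 hf
  obtain ⟨B', C', hB', hC'⟩ := (isHolder2_iff hθ).1 hg
  exact (isHolder2_iff hθ).2
    ⟨B + B', C + C', fun ω => norm_add_le_of_le (hB ω) (hB' ω), hC.add hC'⟩

lemma IsHolder2.neg (hθ : 0 < θ) (hf : IsHolder2 θ f) : IsHolder2 θ (-f) := by
  obtain ⟨B, C, hB, hC⟩ := (isHolder2_iff hθ).1 hf
  exact (isHolder2_iff hθ).2 ⟨B, C, fun ω => (norm_neg (f ω)).trans_le (hB ω), hC.neg⟩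

lemma IsHolder2.sub (hθ : 0 < θ) (hf : IsHolder2 θ f) (hg : IsHolder2 θ g) :
    IsHolder2 θ (f - g) :=
  sub_eq_add_neg f g ▸ hf.add hθ (hg.neg hθ)

lemma IsHolder2.mono {θ' : ℝ} (hθ : 0 < θ) (hθθ' : θ ≤ θ') (hf : IsHolder2 θ f) :
    IsHolder2 θ' f := by
  obtain ⟨B, C, hB, hC⟩ := (isHolder2_iff hθ).1 hf
  exact (isHolder2_iff (hθ.trans_le hθθ')).2 ⟨B, C, hB, hC.mono hθ hθθ'⟩

lemma IsHolder2.comp_shift2 (hθ : 0 < θ) (hf : IsHolder2 θ f) : IsHolder2 θ (f ∘ shift2) := by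
  obtain ⟨B, C, hB, hC⟩ := (isHolder2_iff hθ).1 hf
  exact (isHolder2_iff hθ).2 ⟨B, _, fun ω => hB _, hC.comp_shift2 hθ hB⟩

end Holder

lemma hasSum_const_mul_pow_succ {θ : ℝ} (hθ0 : 0 ≤ θ) (hθ1 : θ < 1) (C : ℝ) :
    HasSum (fun j : ℕ => C * θ ^ (j + 1)) (C * θ / (1 - θ)) := by
  rw [div_eq_mul_inv]
  exact ((hasSum_geometric_of_lt_one hθ0 hθ1).mul_left (C * θ)).congr_fun fun j => by ring

lemma abs_tsum_le_of_head_tail {d : ℕ → ℝ} (hd : Summable d) {θ a : ℝ} (hθ0 : 0 ≤ θ)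
    (hθ1 : θ < 1) (ha : 0 ≤ a) {M N : ℕ} (hMN : M ≤ N)
    (hhead : ∀ j < M, |d j| ≤ a * θ ^ (N - j)) (htail : ∀ j, M ≤ j → |d j| ≤ a * θ ^ (j + 1)) :
    |∑' j, d j| ≤ a * (θ ^ (N + 1 - M) + θ ^ (M + 1)) / (1 - θ) := by
  have hhead_sum : |∑ j ∈ Finset.range M, d j| ≤ a * θ ^ (N + 1 - M) / (1 - θ) :=
    calc |∑ j ∈ Finset.range M, d j| ≤ ∑ j ∈ Finset.range M, a * θ ^ (N - j) :=
          (Finset.abs_sum_le_sum_abs _ _).trans <|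
            Finset.sum_le_sum fun j hj => hhead j (Finset.mem_range.1 hj)
      _ = a * ∑ i ∈ Finset.Ico (N + 1 - M) (N + 1), θ ^ i := by
          rw [← Finset.mul_sum, Finset.range_eq_Ico, Finset.sum_Ico_reflect _ _ (by omega),
            Nat.sub_zero]
      _ ≤ a * θ ^ (N + 1 - M) / (1 - θ) := by
          rw [mul_div_assoc]
          exact mul_le_mul_of_nonneg_left (geom_sum_Ico_le_of_lt_one hθ0 hθ1) ha
  have htail_sum : |∑' k, d (k + M)| ≤ a * θ ^ (M + 1) / (1 - θ) := by
    have hgeom := (hasSum_geometric_of_lt_one hθ0 hθ1).mul_left (a * θ ^ (M + 1))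
    refine tsum_of_norm_bounded (f := fun k => d (k + M)) hgeom fun k => ?_
    calc ‖d (k + M)‖ ≤ a * θ ^ (k + M + 1) := htail _ (Nat.le_add_left M k)
      _ = a * θ ^ (M + 1) * θ ^ k := by ring
  rw [← hd.sum_add_tsum_nat_add M, mul_add, add_div]
  exact (abs_add_le _ _).trans (add_le_add hhead_sum htail_sum)

lemma pow_le_sqrt_pow {θ : ℝ} (hθ0 : 0 ≤ θ) (hθ1 : θ ≤ 1) {a N : ℕ} (h : N ≤ 2 * a) :
    θ ^ a ≤ √θ ^ N := by
  calc θ ^ a = √θ ^ (2 * a) := by rw [pow_mul, Real.sq_sqrt hθ0]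
    _ ≤ √θ ^ N := pow_le_pow_of_le_one (Real.sqrt_nonneg θ) (Real.sqrt_le_one.2 hθ1) h

def erasePast (ω : Seq2) : Seq2 := fun k => if 0 ≤ k then ω k else false

lemma erasePast_apply_of_nonneg {ω : Seq2} {k : ℤ} (hk : 0 ≤ k) : erasePast ω k = ω k :=
  if_pos hk

lemma Agree2.erasePast {N : ℕ} {ω ω' : Seq2} (h : Agree2 N ω ω') :
    Agree2 N (erasePast ω) (erasePast ω') := by
  intro i hi
  by_cases hi0 : 0 ≤ i
  · simp only [erasePast_apply_of_nonneg hi0, h i hi]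
  · simp only [_root_.erasePast, if_neg hi0]

lemma erasePast_eq_of_agree_nonneg {ω ω' : Seq2} (h : ∀ k : ℤ, 0 ≤ k → ω k = ω' k) :
    erasePast ω = erasePast ω' := by
  funext k
  by_cases hk : 0 ≤ k
  · simp only [erasePast_apply_of_nonneg hk, h k hk]
  · simp only [erasePast, if_neg hk]

section Sinai

variable {θ C : ℝ} {β : Seq2 → ℝ}

def sinaiTerm (β : Seq2 → ℝ) (j : ℕ) (ω : Seq2) : ℝ :=
  β (shift2^[j] ω) - β (shift2^[j] (erasePast ω))

noncomputable def sinaiTransfer (β : Seq2 → ℝ) (ω : Seq2) : ℝ :=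
  ∑' j, sinaiTerm β j ω

noncomputable def sinaiOneSided (β : Seq2 → ℝ) : Seq2 → ℝ :=
  β - sinaiTransfer β + sinaiTransfer β ∘ shift2

lemma abs_sinaiTerm_le (hβ : VarLE θ C β) (j : ℕ) (ω : Seq2) :
    |sinaiTerm β j ω| ≤ C * θ ^ (j + 1) :=
  hβ (j + 1) (Nat.le_add_left 1 j) _ _ <|
    agree2_shift2_iterate_of_agree_nonneg (fun _ hk => (erasePast_apply_of_nonneg hk).symm) j

lemma abs_sinaiTerm_sub_le (hβ : VarLE θ C β) {N j : ℕ} {ω ω' : Seq2} (h : Agree2 N ω ω')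
    (hj : j < N) : |sinaiTerm β j ω - sinaiTerm β j ω'| ≤ 2 * C * θ ^ (N - j) := by
  have hNj : 1 ≤ N - j := by omega
  calc |sinaiTerm β j ω - sinaiTerm β j ω'|
        = |(β (shift2^[j] ω) - β (shift2^[j] ω')) -
            (β (shift2^[j] (erasePast ω)) - β (shift2^[j] (erasePast ω')))| := by
          rw [sinaiTerm, sinaiTerm, sub_sub_sub_comm]
    _ ≤ C * θ ^ (N - j) + C * θ ^ (N - j) :=
        (abs_sub _ _).trans <| add_le_add (hβ _ hNj _ _ (h.shift2_iterate j))
          (hβ _ hNj _ _ (h.erasePast.shift2_iterate j))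
    _ = 2 * C * θ ^ (N - j) := by ring

lemma summable_sinaiTerm (hθ0 : 0 ≤ θ) (hθ1 : θ < 1) (hβ : VarLE θ C β) (ω : Seq2) :
    Summable fun j => sinaiTerm β j ω :=
  .of_norm_bounded (hasSum_const_mul_pow_succ hθ0 hθ1 C).summable (abs_sinaiTerm_le hβ · ω)

lemma abs_sinaiTransfer_le (hθ0 : 0 ≤ θ) (hθ1 : θ < 1) (hβ : VarLE θ C β) (ω : Seq2) :
    |sinaiTransfer β ω| ≤ C * θ / (1 - θ) :=
  tsum_of_norm_bounded (f := (sinaiTerm β · ω)) (hasSum_const_mul_pow_succ hθ0 hθ1 C)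
    (abs_sinaiTerm_le hβ · ω)

lemma varLE_sinaiTransfer (hθ0 : 0 < θ) (hθ1 : θ < 1) (hβ : VarLE θ C β) :
    VarLE (√θ) (4 * C / (1 - θ)) (sinaiTransfer β) := by
  intro N hN ω ω' h
  have hC := hβ.nonneg hθ0
  have hsum := summable_sinaiTerm hθ0.le hθ1 hβ
  -- the first `N / 2` terms are controlled by the agreement of `ω, ω'`, the others by their size
  have key := abs_tsum_le_of_head_tail ((hsum ω).sub (hsum ω')) hθ0.le hθ1
    (by positivity : 0 ≤ 2 * C) (Nat.div_le_self N 2)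
    (fun j hj => abs_sinaiTerm_sub_le hβ h (by omega))
    (fun j _ => (abs_sub _ _).trans (by
      linarith [abs_sinaiTerm_le hβ j ω, abs_sinaiTerm_le hβ j ω']))
  have h1 : θ ^ (N + 1 - N / 2) ≤ √θ ^ N := pow_le_sqrt_pow hθ0.le hθ1.le (by omega)
  have h2 : θ ^ (N / 2 + 1) ≤ √θ ^ N := pow_le_sqrt_pow hθ0.le hθ1.le (by omega)
  rw [Real.norm_eq_abs, sinaiTransfer, sinaiTransfer, ← (hsum ω).tsum_sub (hsum ω')]
  calc _ ≤ 2 * C * (θ ^ (N + 1 - N / 2) + θ ^ (N / 2 + 1)) / (1 - θ) := key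
    _ ≤ 2 * C * (√θ ^ N + √θ ^ N) / (1 - θ) := by gcongr
    _ = 4 * C / (1 - θ) * √θ ^ N := by ring

lemma sinaiTerm_sub_of_agree_nonneg {ω ω' : Seq2} (h : ∀ k : ℤ, 0 ≤ k → ω k = ω' k) (j : ℕ) :
    sinaiTerm β j ω - sinaiTerm β j ω' = β (shift2^[j] ω) - β (shift2^[j] ω') := by
  rw [sinaiTerm, sinaiTerm, erasePast_eq_of_agree_nonneg h, sub_sub_sub_cancel_right]

lemma dependsOnNonneg_sinaiOneSided (hθ0 : 0 ≤ θ) (hθ1 : θ < 1) (hβ : VarLE θ C β) :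
    DependsOnNonneg (sinaiOneSided β) := by
  intro ω ω' h
  have hσ : ∀ k : ℤ, 0 ≤ k → shift2 ω k = shift2 ω' k := fun k hk => h (k + 1) (by omega)
  have hsum := summable_sinaiTerm hθ0 hθ1 hβ
  set a : ℕ → ℝ := fun j => β (shift2^[j] ω) - β (shift2^[j] ω')
  -- `erasePast` cannot tell `ω` from `ω'`, nor `σω` from `σω'`, so the differences telescope
  have hχ : sinaiTransfer β ω - sinaiTransfer β ω' = ∑' j, a j := by
    rw [sinaiTransfer, sinaiTransfer, ← (hsum ω).tsum_sub (hsum ω')]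
    exact tsum_congr (sinaiTerm_sub_of_agree_nonneg h)
  have hχσ : sinaiTransfer β (shift2 ω) - sinaiTransfer β (shift2 ω') = ∑' j, a (j + 1) := by
    rw [sinaiTransfer, sinaiTransfer, ← (hsum _).tsum_sub (hsum _)]
    exact tsum_congr fun j => by
      simp only [sinaiTerm_sub_of_agree_nonneg hσ, a, Function.iterate_succ_apply]
  have ha : Summable a := ((hsum ω).sub (hsum ω')).congr (sinaiTerm_sub_of_agree_nonneg h)
  have hdiff : sinaiOneSided β ω - sinaiOneSided β ω' = 0 := by
    calc sinaiOneSided β ω - sinaiOneSided β ω'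
          = a 0 - (sinaiTransfer β ω - sinaiTransfer β ω') +
              (sinaiTransfer β (shift2 ω) - sinaiTransfer β (shift2 ω')) := by
            simp only [sinaiOneSided, a, Pi.add_apply, Pi.sub_apply, Function.comp_apply,
              Function.iterate_zero, id]
            ring
      _ = 0 := by rw [hχ, hχσ, ha.tsum_eq_zero_add]; ring
  exact sub_eq_zero.1 hdiff

end Sinai

/-- Sinai's lemma: any `θ`-Hölder function `β` on the two-sided shift
space is cohomologous, via `θ^{1/2}`-Hölder functions, to a function `β̃` depending only
on the nonnegative coordinates: `β = β̃ + χ − χ∘σ`. -/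
theorem statement10
    (θ : ℝ) (hθ : θ ∈ Set.Ioo (0 : ℝ) 1)
    (β : Seq2 → ℝ) (hβ : IsHolder2 θ β) :
    ∃ βt χ : Seq2 → ℝ,
      IsHolder2 (Real.sqrt θ) βt ∧ IsHolder2 (Real.sqrt θ) χ ∧
      DependsOnNonneg βt ∧
      ∀ ω : Seq2, β ω = βt ω + χ ω - χ (shift2 ω) := by
  obtain ⟨hθ0, hθ1⟩ := hθ
  have ht : 0 < √θ := Real.sqrt_pos.2 hθ0
  obtain ⟨-, C, -, hC⟩ := (isHolder2_iff hθ0).1 hβ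
  have hχ : IsHolder2 (√θ) (sinaiTransfer β) := (isHolder2_iff ht).2
    ⟨_, _, abs_sinaiTransfer_le hθ0.le hθ1 hC, varLE_sinaiTransfer hθ0 hθ1 hC⟩
  have hβt : IsHolder2 (√θ) β := hβ.mono hθ0 (Real.le_sqrt_self_iff.2 hθ1.le)
  refine ⟨sinaiOneSided β, sinaiTransfer β, (hβt.sub ht hχ).add ht (hχ.comp_shift2 ht), hχ,
    dependsOnNonneg_sinaiOneSided hθ0.le hθ1 hC, fun ω => ?_⟩
  simp only [sinaiOneSided, Pi.add_apply, Pi.sub_apply, Function.comp_apply]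
  ring
end

section
/- Let (X_j)_{j ≥ 1} be real random variables on (Σ, μ) such that |X_j| ≤ M for all j and |∫_Σ X_i X_j dμ| ≤ C₀ r₀^{j−i} for all 1 ≤ i ≤ j, for some constants M, C₀ > 0 and r₀ ∈ (0,1). Set S_n = Σ_{j=1}^{n} X_j and σ_n² = ∫_Σ S_n² dμ, and assume σ_n² ≥ σ_-² n for some σ_- > 0 and all large n. Fix τ ∈ (0,1) and, for each n, set p = ⌊n^τ⌋, q = ⌈(log n)²⌉, k = ⌊n/(p+q)⌋, ξ_j = Σ_{m = jp+jq+1}^{(j+1)p+jq} X_m for 0 ≤ j ≤ k−1, and S̃_n = Σ_{j=0}^{k−1} ξ_j. Then for every t ∈ ℝ, |∫_Σ e^{i t S_n/σ_n} dμ − ∫_Σ e^{i t S̃_n/σ_n} dμ| → 0 as n → ∞. -/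
open MeasureTheory Filter Topology
open scoped ENNReal BoundedContinuousFunction

/-- Partial sum `S_n = Σ_{j=1}^n X_j`. -/
noncomputable def Sn (X : ℕ → Seq2 → ℝ) (n : ℕ) (ω : Seq2) : ℝ :=
  ∑ j ∈ Finset.Icc 1 n, X j ω

/-- Block length `p = ⌊n^τ⌋`. -/
noncomputable def blockP (τ : ℝ) (n : ℕ) : ℕ := Nat.floor ((n : ℝ) ^ τ)

/-- Gap length `q = ⌈(log n)²⌉`. -/
noncomputable def blockQ (n : ℕ) : ℕ := Nat.ceil (Real.log n ^ 2)

/-- Number of blocks `k = ⌊n/(p+q)⌋`. -/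
noncomputable def blockK (τ : ℝ) (n : ℕ) : ℕ := n / (blockP τ n + blockQ n)

/-- The `j`-th Bernstein block `ξ_j = Σ_{m=jp+jq+1}^{(j+1)p+jq} X_m`. -/
noncomputable def xiBlock (X : ℕ → Seq2 → ℝ) (τ : ℝ) (n j : ℕ) (ω : Seq2) : ℝ :=
  ∑ m ∈ Finset.Icc (j * blockP τ n + j * blockQ n + 1)
      ((j + 1) * blockP τ n + j * blockQ n), X m ω

/-- The block sum `S̃_n = Σ_{j=0}^{k-1} ξ_j`. -/
noncomputable def Stil (X : ℕ → Seq2 → ℝ) (τ : ℝ) (n : ℕ) (ω : Seq2) : ℝ :=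
  ∑ j ∈ Finset.range (blockK τ n), xiBlock X τ n j ω

/-- `σ_n = (∫ S_n² dμ)^{1/2}`. -/
noncomputable def sigman (μ : MeasureTheory.Measure Seq2) (X : ℕ → Seq2 → ℝ)
    (n : ℕ) : ℝ :=
  Real.sqrt (∫ ω, (Sn X n ω) ^ 2 ∂μ)


/-!
Since `x ↦ exp (i x)` is 1-Lipschitz, the two characteristic functions differ by at most
`|t| / σ_n · E|S_n - S̃_n| ≤ |t| / σ_n · (E (S_n - S̃_n)²)^{1/2}`. Now `S_n - S̃_n` is the sum of
the `X_m` over the `n - kp` indices outside the blocks, and the exponential decay of correlations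
bounds the second moment of such a sum by a constant times the number of its terms. As
`n - kp ≤ kq + p + q = o(n)` (because `q = o(p)` and `p = o(n)`) and `σ_n ≥ σ_- √n`, the
difference is `O(((n - kp) / n)^{1/2}) → 0`.
-/

section Characteristic

variable {α : Type*} [MeasurableSpace α] {μ : Measure α}

lemma norm_cexp_I_mul_sub_cexp_I_mul_le (a b : ℝ) :
    ‖Complex.exp (Complex.I * a) - Complex.exp (Complex.I * b)‖ ≤ |a - b| := by
  have h : Complex.exp (Complex.I * a) - Complex.exp (Complex.I * b) =
      Complex.exp (Complex.I * b) * (Complex.exp (Complex.I * (a - b : ℝ)) - 1) := by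
    rw [mul_sub, mul_one, ← Complex.exp_add]; push_cast; ring_nf
  rw [h, norm_mul, Complex.norm_exp_I_mul_ofReal, one_mul]
  exact Real.norm_exp_I_mul_ofReal_sub_one_le

lemma norm_integral_cexp_sub_le [IsFiniteMeasure μ] {S T : α → ℝ} (hS : AEMeasurable S μ)
    (hT : AEMeasurable T μ) (hST : Integrable (fun ω => S ω - T ω) μ) (t σ : ℝ) :
    ‖(∫ ω, Complex.exp (Complex.I * t * S ω / σ) ∂μ) -
        ∫ ω, Complex.exp (Complex.I * t * T ω / σ) ∂μ‖
      ≤ |t| / |σ| * ∫ ω, |S ω - T ω| ∂μ := by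
  have hphase (U : α → ℝ) (ω : α) :
      Complex.I * t * U ω / σ = Complex.I * ((t * U ω / σ : ℝ) : ℂ) := by
    push_cast; ring
  have hint (U : α → ℝ) (hU : AEMeasurable U μ) :
      Integrable (fun ω => Complex.exp (Complex.I * t * U ω / σ)) μ := by
    refine Integrable.of_bound (C := 1) (by fun_prop) (ae_of_all _ fun ω => ?_)
    rw [hphase, Complex.norm_exp_I_mul_ofReal]
  rw [← integral_sub (hint S hS) (hint T hT), ← integral_const_mul]
  refine (norm_integral_le_integral_norm _).trans <|
    integral_mono_of_nonneg (ae_of_all _ fun _ => norm_nonneg _)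
      (hST.abs.const_mul _) (ae_of_all _ fun ω => ?_)
  calc _ ≤ |t * S ω / σ - t * T ω / σ| := by
        simp only [hphase]; exact norm_cexp_I_mul_sub_cexp_I_mul_le _ _
    _ = |t| / |σ| * |S ω - T ω| := by
        rw [← sub_div, ← mul_sub, abs_div, abs_mul]; ring

lemma integral_abs_le_sqrt_integral_sq [IsProbabilityMeasure μ] {f : α → ℝ}
    (hf : MemLp f 2 μ) : ∫ ω, |f ω| ∂μ ≤ Real.sqrt (∫ ω, f ω ^ 2 ∂μ) := by
  have hvar := ProbabilityTheory.variance_eq_sub hf.abs ▸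
    ProbabilityTheory.variance_nonneg |f| μ
  simp only [Pi.pow_apply, Pi.abs_apply, sq_abs] at hvar
  exact Real.le_sqrt_of_sq_le (by linarith)

end Characteristic

section Covariance

lemma sum_pow_le_of_injOn {r : ℝ} (hr0 : 0 ≤ r) (hr1 : r < 1) {s : Finset ℕ} {g : ℕ → ℕ}
    (hg : Set.InjOn g s) : ∑ j ∈ s, r ^ g j ≤ (1 - r)⁻¹ := by
  rw [← Finset.sum_image hg]
  exact sum_le_hasSum _ (fun i _ => pow_nonneg hr0 i) (hasSum_geometric_of_lt_one hr0 hr1)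

lemma sum_pow_dist_le {r : ℝ} (hr0 : 0 ≤ r) (hr1 : r < 1) (s : Finset ℕ) (i : ℕ) :
    ∑ j ∈ s, r ^ Nat.dist i j ≤ 2 / (1 - r) := by
  rw [← Finset.sum_filter_add_sum_filter_not s (i ≤ ·)]
  have hright : ∑ j ∈ s with i ≤ j, r ^ Nat.dist i j ≤ (1 - r)⁻¹ :=
    sum_pow_le_of_injOn hr0 hr1 fun a ha b hb hab => by
      simp only [Finset.coe_filter, Set.mem_ofPred_eq] at ha hb
      rw [Nat.dist_eq_sub_of_le ha.2, Nat.dist_eq_sub_of_le hb.2] at hab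
      omega
  have hleft : ∑ j ∈ s with ¬i ≤ j, r ^ Nat.dist i j ≤ (1 - r)⁻¹ :=
    sum_pow_le_of_injOn hr0 hr1 fun a ha b hb hab => by
      simp only [Finset.coe_filter, Set.mem_ofPred_eq] at ha hb
      rw [Nat.dist_eq_sub_of_le_right (by omega), Nat.dist_eq_sub_of_le_right (by omega)] at hab
      omega
  linarith [show 2 / (1 - r) = (1 - r)⁻¹ + (1 - r)⁻¹ by ring]

variable {α : Type*} [MeasurableSpace α] {μ : Measure α}

lemma integral_sq_sum_le_of_covariance_decay {X : ℕ → α → ℝ} {s : Finset ℕ} {C r : ℝ}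
    (hX : ∀ i ∈ s, MemLp (X i) 2 μ) (hC : 0 ≤ C) (hr0 : 0 ≤ r) (hr1 : r < 1)
    (hcov : ∀ i ∈ s, ∀ j ∈ s, i ≤ j → |∫ ω, X i ω * X j ω ∂μ| ≤ C * r ^ (j - i)) :
    ∫ ω, (∑ i ∈ s, X i ω) ^ 2 ∂μ ≤ 2 * C / (1 - r) * s.card := by
  have hprod : ∀ i ∈ s, ∀ j ∈ s, Integrable (fun ω => X i ω * X j ω) μ :=
    fun i hi j hj => (hX i hi).integrable_mul (hX j hj)
  have hdist : ∀ i ∈ s, ∀ j ∈ s, |∫ ω, X i ω * X j ω ∂μ| ≤ C * r ^ Nat.dist i j := by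
    intro i hi j hj
    rcases le_total i j with hij | hji
    · rw [Nat.dist_eq_sub_of_le hij]; exact hcov i hi j hj hij
    · simp_rw [mul_comm (X i _)]
      rw [Nat.dist_eq_sub_of_le_right hji]; exact hcov j hj i hi hji
  calc ∫ ω, (∑ i ∈ s, X i ω) ^ 2 ∂μ
      = ∑ i ∈ s, ∑ j ∈ s, ∫ ω, X i ω * X j ω ∂μ := by
        simp_rw [sq, Finset.sum_mul_sum]
        rw [integral_finsetSum s fun i hi => integrable_finsetSum s (hprod i hi)]
        exact Finset.sum_congr rfl fun i hi => integral_finsetSum s (hprod i hi)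
    _ ≤ ∑ i ∈ s, ∑ j ∈ s, C * r ^ Nat.dist i j :=
        Finset.sum_le_sum fun i hi => Finset.sum_le_sum fun j hj =>
          (le_abs_self _).trans (hdist i hi j hj)
    _ ≤ ∑ _i ∈ s, 2 * C / (1 - r) :=
        Finset.sum_le_sum fun i _ => by
          rw [← Finset.mul_sum, mul_comm 2 C, mul_div_assoc]
          exact mul_le_mul_of_nonneg_left (sum_pow_dist_le hr0 hr1 s i) hC
    _ = 2 * C / (1 - r) * s.card := by rw [Finset.sum_const, nsmul_eq_mul, mul_comm]

end Covariance

section Blocks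

def bernsteinBlock (p q j : ℕ) : Finset ℕ :=
  Finset.Icc (j * p + j * q + 1) ((j + 1) * p + j * q)

/-- The indices in `[1, n]` outside the first `k` blocks: the gaps and the tail beyond `k (p + q)`. -/
def bernsteinGaps (n p q k : ℕ) : Finset ℕ :=
  Finset.Icc 1 n \ (Finset.range k).biUnion (bernsteinBlock p q)

variable {n p q k : ℕ}

lemma card_bernsteinBlock (p q j : ℕ) : (bernsteinBlock p q j).card = p := by
  rw [bernsteinBlock, Nat.card_Icc, add_one_mul]; omega

lemma pairwise_disjoint_bernsteinBlock (p q : ℕ) : Pairwise (Function.onFun Disjoint (bernsteinBlock p q)) := by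
  refine (pairwise_disjoint_on _).2 fun i j hij => Finset.disjoint_left.2 fun m hmi hmj => ?_
  simp only [bernsteinBlock, Finset.mem_Icc] at hmi hmj
  have : (i + 1) * p + i * q ≤ j * p + j * q :=
    add_le_add (Nat.mul_le_mul_right _ hij) (Nat.mul_le_mul_right _ hij.le)
  omega

lemma biUnion_bernsteinBlock_subset (hk : k * (p + q) ≤ n) :
    (Finset.range k).biUnion (bernsteinBlock p q) ⊆ Finset.Icc 1 n := by
  intro m hm
  obtain ⟨j, hj, hmj⟩ := Finset.mem_biUnion.1 hm
  simp only [bernsteinBlock, Finset.mem_Icc, Finset.mem_range] at hj hmj ⊢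
  have hj' : (j + 1) * (p + q) ≤ k * (p + q) := Nat.mul_le_mul_right _ hj
  have : (j + 1) * (p + q) = (j + 1) * p + j * q + q := by ring
  omega

lemma card_bernsteinGaps (hk : k * (p + q) ≤ n) :
    (bernsteinGaps n p q k).card = n - k * p := by
  rw [bernsteinGaps, Finset.card_sdiff_of_subset (biUnion_bernsteinBlock_subset hk),
    Finset.card_biUnion ((pairwise_disjoint_bernsteinBlock p q).set_pairwise _), Nat.card_Icc]
  simp [card_bernsteinBlock]

lemma bernsteinGaps_subset : bernsteinGaps n p q k ⊆ Finset.Icc 1 n := Finset.sdiff_subset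

lemma sub_div_mul_le (n p q : ℕ) (hpq : 0 < p + q) :
    n - n / (p + q) * p ≤ n / (p + q) * q + (p + q) := by
  have hdiv := Nat.div_add_mod n (p + q)
  have hmod := Nat.mod_lt n hpq
  rw [mul_comm, mul_add] at hdiv
  omega

lemma Sn_sub_Stil (X : ℕ → Seq2 → ℝ) (τ : ℝ) (n : ℕ) (ω : Seq2) :
    Sn X n ω - Stil X τ n ω =
      ∑ m ∈ bernsteinGaps n (blockP τ n) (blockQ n) (blockK τ n), X m ω := by
  have hsub := biUnion_bernsteinBlock_subset (k := blockK τ n)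
    (Nat.div_mul_le_self n (blockP τ n + blockQ n))
  rw [bernsteinGaps, Finset.sum_sdiff_eq_sub hsub, Stil,
    Finset.sum_biUnion ((pairwise_disjoint_bernsteinBlock _ _).set_pairwise _)]
  rfl

end Blocks

section Asymptotics

open Asymptotics

variable {τ : ℝ}

lemma tendsto_natCast_rpow_atTop (hτ : 0 < τ) :
    Tendsto (fun n : ℕ => (n : ℝ) ^ τ) atTop atTop :=
  (tendsto_rpow_atTop hτ).comp tendsto_natCast_atTop_atTop

lemma blockQ_isLittleO_blockP (hτ : 0 < τ) :
    (fun n => (blockQ n : ℝ)) =o[atTop] fun n => (blockP τ n : ℝ) := by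
  have hQ : (fun n => (blockQ n : ℝ)) =O[atTop] fun n : ℕ => Real.log n ^ (2 : ℝ) + 1 :=
    isBigO_of_le _ fun n => by
      rw [Real.norm_natCast, Real.rpow_two, Real.norm_of_nonneg (by positivity)]
      exact (Nat.ceil_lt_add_one (sq_nonneg _)).le
  have hlog : (fun n : ℕ => Real.log n ^ (2 : ℝ) + 1) =o[atTop] fun n : ℕ => (n : ℝ) ^ τ :=
    ((isLittleO_log_rpow_rpow_atTop 2 hτ).comp_tendsto tendsto_natCast_atTop_atTop).add
      ((isLittleO_one_left_iff ℝ).2 <| tendsto_norm_atTop_atTop.comp (tendsto_natCast_rpow_atTop hτ))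
  have hP : (fun n : ℕ => (n : ℝ) ^ τ) =O[atTop] fun n => (blockP τ n : ℝ) := by
    refine IsBigO.of_bound 2 ?_
    filter_upwards [(tendsto_natCast_rpow_atTop hτ).eventually_ge_atTop 2] with n hn
    have hfloor := Nat.sub_one_lt_floor ((n : ℝ) ^ τ)
    rw [Real.norm_of_nonneg (by positivity), Real.norm_natCast, blockP]
    linarith
  exact hQ.trans_isLittleO (hlog.trans_isBigO hP)

lemma blockP_isLittleO_self (hτ : τ < 1) :
    (fun n => (blockP τ n : ℝ)) =o[atTop] fun n : ℕ => (n : ℝ) := by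
  have hP : (fun n => (blockP τ n : ℝ)) =O[atTop] fun n : ℕ => (n : ℝ) ^ τ :=
    isBigO_of_le _ fun n => by
      rw [Real.norm_natCast, Real.norm_of_nonneg (by positivity)]
      exact Nat.floor_le (by positivity)
  have hrpow : (fun x : ℝ => x ^ τ) =o[atTop] fun x => x := by
    refine (isLittleO_iff_tendsto' ?_).2 ((tendsto_rpow_neg_atTop (sub_pos.2 hτ)).congr' ?_)
    · filter_upwards [eventually_gt_atTop 0] with x hx h using absurd h hx.ne'
    · filter_upwards [eventually_gt_atTop 0] with x hx
      rw [neg_sub, Real.rpow_sub hx, Real.rpow_one]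
  exact hP.trans_isLittleO (hrpow.comp_tendsto tendsto_natCast_atTop_atTop)

lemma gapFraction_le {n p : ℕ} (q : ℕ) (hn : 0 < n) (hp : 0 < p) :
    ((n - n / (p + q) * p : ℕ) : ℝ) / n ≤ (q : ℝ) / p + ((p : ℝ) + q) / n := by
  set k := n / (p + q)
  have hkp : (k : ℝ) * p ≤ n := by
    exact_mod_cast (Nat.mul_le_mul_left k (Nat.le_add_right p q)).trans
      (Nat.div_mul_le_self n (p + q))
  have hgap : ((n - k * p : ℕ) : ℝ) ≤ k * q + (p + q) := by
    exact_mod_cast sub_div_mul_le n p q (by omega)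
  have hnR : (0 : ℝ) < n := by exact_mod_cast hn
  have hpR : (0 : ℝ) < p := by exact_mod_cast hp
  have hkq : (k : ℝ) * q / n ≤ q / p := by
    rw [div_le_div_iff₀ hnR hpR]
    nlinarith [Nat.cast_nonneg (α := ℝ) q]
  calc ((n - k * p : ℕ) : ℝ) / n ≤ (k * q + (p + q)) / n := by gcongr
    _ = k * q / n + (p + q) / n := add_div _ _ _
    _ ≤ q / p + (p + q) / n := by gcongr

lemma tendsto_gapFraction (hτ : τ ∈ Set.Ioo 0 1) :
    Tendsto (fun n => ((n - blockK τ n * blockP τ n : ℕ) : ℝ) / n) atTop (𝓝 0) := by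
  have hQP := blockQ_isLittleO_blockP hτ.1
  have hPN := blockP_isLittleO_self hτ.2
  have hlim : Tendsto (fun n => (blockQ n : ℝ) / blockP τ n +
      ((blockP τ n : ℝ) + blockQ n) / n) atTop (𝓝 0) := by
    simpa using hQP.tendsto_div_nhds_zero.add
      (hPN.add (hQP.trans hPN)).tendsto_div_nhds_zero
  refine squeeze_zero' (Eventually.of_forall fun n => by positivity) ?_ hlim
  filter_upwards [eventually_gt_atTop 0,
    (tendsto_natCast_rpow_atTop hτ.1).eventually_ge_atTop 1] with n hn hpow
  exact gapFraction_le _ hn (Nat.le_floor (by simpa using hpow))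

end Asymptotics

section Bernstein

variable {μ : Measure Seq2} {X : ℕ → Seq2 → ℝ}

lemma mul_sqrt_le_sigman {σm : ℝ} (hσm : 0 ≤ σm) {n : ℕ}
    (hvar : σm ^ 2 * n ≤ ∫ ω, (Sn X n ω) ^ 2 ∂μ) : σm * Real.sqrt n ≤ sigman μ X n := by
  rw [sigman, ← Real.sqrt_sq hσm, ← Real.sqrt_mul (sq_nonneg _)]
  exact Real.sqrt_le_sqrt hvar

lemma norm_integral_cexp_Sn_sub_Stil_le [IsProbabilityMeasure μ] (hmeas : ∀ j, Measurable (X j))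
    {M : ℝ} (hbd : ∀ j : ℕ, 1 ≤ j → ∀ ω, |X j ω| ≤ M) {C₀ r₀ : ℝ} (hC₀ : 0 ≤ C₀)
    (hr0 : 0 ≤ r₀) (hr1 : r₀ < 1)
    (hcov : ∀ i j : ℕ, 1 ≤ i → i ≤ j → |∫ ω, X i ω * X j ω ∂μ| ≤ C₀ * r₀ ^ (j - i))
    (τ t : ℝ) (n : ℕ) :
    ‖(∫ ω, Complex.exp (Complex.I * t * Sn X n ω / sigman μ X n) ∂μ) -
        ∫ ω, Complex.exp (Complex.I * t * Stil X τ n ω / sigman μ X n) ∂μ‖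
      ≤ |t| / sigman μ X n *
          Real.sqrt (2 * C₀ / (1 - r₀) * (n - blockK τ n * blockP τ n : ℕ)) := by
  set G := bernsteinGaps n (blockP τ n) (blockQ n) (blockK τ n)
  have hG : ∀ m ∈ G, 1 ≤ m := fun m hm => (Finset.mem_Icc.1 (bernsteinGaps_subset hm)).1
  have hX : ∀ m ∈ G, MemLp (X m) 2 μ := fun m hm =>
    MemLp.of_bound (hmeas m).aestronglyMeasurable M (ae_of_all _ (hbd m (hG m hm)))
  have hD : MemLp (fun ω => ∑ m ∈ G, X m ω) 2 μ := memLp_finsetSum G hX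
  have hSn : Measurable (Sn X n) := Finset.measurable_sum _ fun j _ => hmeas j
  have hStil : Measurable (Stil X τ n) :=
    Finset.measurable_sum _ fun j _ => Finset.measurable_sum _ fun m _ => hmeas m
  have hσ : 0 ≤ sigman μ X n := Real.sqrt_nonneg _
  have hdiff : (fun ω => Sn X n ω - Stil X τ n ω) = fun ω => ∑ m ∈ G, X m ω :=
    funext (Sn_sub_Stil X τ n)
  calc _ ≤ |t| / |sigman μ X n| * ∫ ω, |Sn X n ω - Stil X τ n ω| ∂μ :=
        norm_integral_cexp_sub_le hSn.aemeasurable hStil.aemeasurable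
          (hdiff ▸ hD.integrable one_le_two) t _
    _ = |t| / sigman μ X n * ∫ ω, |∑ m ∈ G, X m ω| ∂μ := by
        simp only [abs_of_nonneg hσ, Sn_sub_Stil, G]
    _ ≤ |t| / sigman μ X n * Real.sqrt (∫ ω, (∑ m ∈ G, X m ω) ^ 2 ∂μ) := by
        gcongr; exact integral_abs_le_sqrt_integral_sq hD
    _ ≤ |t| / sigman μ X n * Real.sqrt (2 * C₀ / (1 - r₀) * G.card) := by
        gcongr
        exact integral_sq_sum_le_of_covariance_decay hX hC₀ hr0 hr1
          fun i hi j hj hij => hcov i j (hG i hi) hij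
    _ = _ := by rw [card_bernsteinGaps (k := blockK τ n) (Nat.div_mul_le_self _ _)]

end Bernstein

theorem statement14_general
    (μ : Measure Seq2) (hμ : IsBernoulli2 μ)
    (X : ℕ → Seq2 → ℝ) (hmeas : ∀ j, Measurable (X j))
    (M : ℝ) (hbd : ∀ j : ℕ, 1 ≤ j → ∀ ω, |X j ω| ≤ M)
    (C₀ : ℝ) (hC₀ : 0 < C₀) (r₀ : ℝ) (hr₀ : r₀ ∈ Set.Ioo (0 : ℝ) 1)
    (hcov : ∀ i j : ℕ, 1 ≤ i → i ≤ j →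
      |∫ ω, X i ω * X j ω ∂μ| ≤ C₀ * r₀ ^ (j - i))
    (σm : ℝ) (hσm : 0 < σm)
    (hvar : ∀ᶠ n : ℕ in atTop, σm ^ 2 * n ≤ ∫ ω, (Sn X n ω) ^ 2 ∂μ)
    (τ : ℝ) (hτ : τ ∈ Set.Ioo (0 : ℝ) 1) (t : ℝ) :
    Tendsto
      (fun n : ℕ =>
        Norm.norm
          ((∫ ω, Complex.exp (Complex.I * (t : ℂ) * (Sn X n ω : ℂ) / (sigman μ X n : ℂ)) ∂μ) -
            ∫ ω, Complex.exp (Complex.I * (t : ℂ) * (Stil X τ n ω : ℂ) / (sigman μ X n : ℂ)) ∂μ))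
      atTop (𝓝 0) := by
  have := hμ.1
  set C₁ := 2 * C₀ / (1 - r₀)
  set gap : ℕ → ℝ := fun n => ((n - blockK τ n * blockP τ n : ℕ) : ℝ)
  have hlim : Tendsto (fun n : ℕ => |t| / σm * Real.sqrt (C₁ * (gap n / n))) atTop (𝓝 0) := by
    simpa using (((tendsto_gapFraction hτ).const_mul C₁).sqrt).const_mul (|t| / σm)
  refine squeeze_zero' (Eventually.of_forall fun n => norm_nonneg _) ?_ hlim
  filter_upwards [hvar, eventually_gt_atTop 0] with n hvar_n hn
  have hσ := mul_sqrt_le_sigman hσm.le hvar_n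
  have hsqrt_n : 0 < Real.sqrt n := Real.sqrt_pos.2 (Nat.cast_pos.2 hn)
  calc _ ≤ |t| / sigman μ X n * Real.sqrt (C₁ * gap n) :=
        norm_integral_cexp_Sn_sub_Stil_le hmeas hbd hC₀.le hr₀.1.le hr₀.2 hcov τ t n
    _ ≤ |t| / (σm * Real.sqrt n) * Real.sqrt (C₁ * gap n) := by gcongr
    _ = |t| / σm * Real.sqrt (C₁ * (gap n / n)) := by
        rw [← mul_div_assoc, Real.sqrt_div' _ (Nat.cast_nonneg n)]
        field_simp

/-- Bernstein block method, step 1: for bounded random variables with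
exponentially decaying correlations and nondegenerate variance, removing the gap blocks
does not change the limit of the characteristic functions. -/
theorem statement14
    (μ : Measure Seq2) (hμ : IsBernoulli2 μ)
    (X : ℕ → Seq2 → ℝ) (hmeas : ∀ j, Measurable (X j))
    (M : ℝ) (hM : 0 < M) (hbd : ∀ j : ℕ, 1 ≤ j → ∀ ω, |X j ω| ≤ M)
    (C₀ : ℝ) (hC₀ : 0 < C₀) (r₀ : ℝ) (hr₀ : r₀ ∈ Set.Ioo (0 : ℝ) 1)
    (hcov : ∀ i j : ℕ, 1 ≤ i → i ≤ j →
      |∫ ω, X i ω * X j ω ∂μ| ≤ C₀ * r₀ ^ (j - i))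
    (σm : ℝ) (hσm : 0 < σm)
    (hvar : ∀ᶠ n : ℕ in atTop, σm ^ 2 * n ≤ ∫ ω, (Sn X n ω) ^ 2 ∂μ)
    (τ : ℝ) (hτ : τ ∈ Set.Ioo (0 : ℝ) 1) (t : ℝ) :
    Tendsto
      (fun n : ℕ =>
        Norm.norm
          ((∫ ω, Complex.exp (Complex.I * (t : ℂ) * (Sn X n ω : ℂ) / (sigman μ X n : ℂ)) ∂μ) -
            ∫ ω, Complex.exp (Complex.I * (t : ℂ) * (Stil X τ n ω : ℂ) / (sigman μ X n : ℂ)) ∂μ))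
      atTop (𝓝 0) :=
  statement14_general μ hμ X hmeas M hbd C₀ hC₀ r₀ hr₀ hcov σm hσm hvar τ hτ t
end
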